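/- arXiv:1204.1136 — 2 statements merged into one kernel-verified Lean document; each statement's English description precedes it below -/
import Mathlib

section
/- Suppose G is connected. Let A ⊊ V be a proper subset of the vertices and let i ∈ A. Then the expected time for the Metropolis–Hastings walk RW(G_1) started at i to reach a vertex outside A satisfies E_i T_{V∖A} < (|A|+1)·(6|A| + 2Δ). -/
open Finset

/-- The Metropolis–Hastings transition matrix on a graph, with unit potential:
`P v u = min (1/deg v) (1/deg u)` for adjacent `u ≠ v`, `0` for non-adjacent `u ≠ v`,
and `P v v = 1 - ∑_{u ∈ Γ(v)} min (1/deg v) (1/deg u)`. -/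
noncomputable def mhMatrix {V : Type*} [Fintype V] [DecidableEq V] (G : SimpleGraph V)
    [DecidableRel G.Adj] : Matrix V V ℝ :=
  Matrix.of fun v u =>
    if u = v then
      1 - ∑ w ∈ G.neighborFinset v, min ((G.degree v : ℝ))⁻¹ ((G.degree w : ℝ))⁻¹
    else if G.Adj v u then min ((G.degree v : ℝ))⁻¹ ((G.degree u : ℝ))⁻¹
    else 0

/-- Probability, for the Markov chain with transition matrix `P` and initial distribution `μ`,
that the trajectory `(X_0, …, X_L)` lies in the event `E`. -/
noncomputable def prTraj {V : Type*} [Fintype V] (P : Matrix V V ℝ) (μ : V → ℝ) (L : ℕ)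
    (E : Set (Fin (L + 1) → V)) : ℝ :=
  ∑ x : Fin (L + 1) → V,
    E.indicator (fun y => μ (y 0) * ∏ τ : Fin L, P (y τ.castSucc) (y τ.succ)) x

/-- Point mass at `i`, as an initial distribution. -/
def dirac {V : Type*} [DecidableEq V] (i : V) : V → ℝ := fun v => if v = i then 1 else 0

/-!
Let `Q` be the walk killed on leaving `A` and `φ = (1 - Q)⁻¹ eᵢ` its Green function with pole `i`.
As `P` is symmetric, `Pr_i[T > t] = ∑ᵥ Qᵗ(v, i)`, hence `E_i T ≤ ∑ᵥ φ v`. By the maximum principle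
`0 ≤ φ ≤ φ i`, and `φ` vanishes off `A`, so `E_i T ≤ |A| φ i`.

`φ i` is an effective resistance: the Dirichlet energy of `φ` is `2 φ i`, and Cauchy–Schwarz
along a shortest path `i = g₀, …, g_k` to `V ∖ A` bounds `φ i` by the path resistance
`∑ⱼ 1 / P(gⱼ, gⱼ₊₁) = ∑ⱼ max (deg gⱼ) (deg gⱼ₊₁)`. A vertex is adjacent to at most three
vertices of a geodesic and the neighbours of `g₀, …, g_{k-2}` lie in `A`, so this sum is at most
`6|A| + 2Δ`.
-/

open Matrix

section Paths

variable {V : Type*} [Fintype V] [DecidableEq V]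

theorem sum_path_prod_eq_sum_vecMul_pow {R : Type*} [CommSemiring R] (M : Matrix V V R)
    (t : ℕ) (μ : V → R) :
    ∑ x : Fin (t + 1) → V, μ (x 0) * ∏ τ : Fin t, M (x τ.castSucc) (x τ.succ) =
      ∑ v, (μ ᵥ* M ^ t) v := by
  induction t generalizing μ with
  | zero => simp [← (Equiv.funUnique (Fin 1) V).symm.sum_comp]
  | succ t ih =>
    rw [← (Fin.consEquiv fun _ => V).sum_comp, Fintype.sum_prod_type, pow_succ',
      ← vecMul_vecMul, ← ih, Finset.sum_comm]
    refine Finset.sum_congr rfl fun y _ => ?_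
    simp [Fin.consEquiv, Fin.prod_univ_succ, vecMul, dotProduct, Finset.sum_mul, mul_assoc]

end Paths

section Killed

variable {V : Type*} [DecidableEq V]

noncomputable def killedMatrix (P : Matrix V V ℝ) (A : Finset V) : Matrix V V ℝ :=
  Matrix.of fun v u => if v ∈ A ∧ u ∈ A then P v u else 0

variable {P : Matrix V V ℝ} {A : Finset V}

theorem prod_killedMatrix_path {t : ℕ} {x : Fin (t + 1) → V} (h0 : x 0 ∈ A) :
    ∏ τ : Fin t, killedMatrix P A (x τ.castSucc) (x τ.succ) =
      if ∀ s : Fin (t + 1), 1 ≤ s.val → x s ∈ A then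
        ∏ τ : Fin t, P (x τ.castSucc) (x τ.succ) else 0 := by
  have hmem : ∀ s : Fin (t + 1), (1 ≤ s.val → x s ∈ A) ↔ x s ∈ A := fun s => by
    rcases Fin.eq_zero_or_eq_succ s with rfl | ⟨τ, rfl⟩ <;> simp [h0]
  split_ifs with h
  · refine Finset.prod_congr rfl fun τ _ => ?_
    simp [killedMatrix, (hmem _).1 (h _)]
  · push Not at h
    obtain ⟨s, hs1, hsA⟩ := h
    obtain ⟨τ, rfl⟩ := Fin.exists_succ_eq.2 (Fin.pos_iff_ne_zero.1 hs1)
    exact Finset.prod_eq_zero (Finset.mem_univ τ) (by simp [killedMatrix, hsA])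

theorem killedMatrix_nonneg (hP : ∀ v u, 0 ≤ P v u) (v u : V) : 0 ≤ killedMatrix P A v u := by
  simp only [killedMatrix, of_apply]
  split_ifs <;> simp [hP]

theorem Matrix.IsSymm.killedMatrix (hsymm : P.IsSymm) : (killedMatrix P A).IsSymm :=
  IsSymm.ext fun v u => by simp [_root_.killedMatrix, hsymm.apply, and_comm]

theorem prTraj_stay_eq_sum_vecMul_pow [Fintype V] {μ : V → ℝ} (hμ : ∀ v ∉ A, μ v = 0) (t : ℕ) :
    prTraj P μ t {x | ∀ s : Fin (t + 1), 1 ≤ s.val → x s ∈ A} =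
      ∑ v, (μ ᵥ* killedMatrix P A ^ t) v := by
  rw [← sum_path_prod_eq_sum_vecMul_pow, prTraj]
  refine Finset.sum_congr rfl fun x _ => ?_
  by_cases h0 : x 0 ∈ A
  · simp [prod_killedMatrix_path h0, Set.indicator_apply]
  · simp [hμ _ h0]

end Killed

theorem dirac_eq_single {V : Type*} [DecidableEq V] (i : V) : dirac i = Pi.single i 1 :=
  funext fun v => by simp [dirac, Pi.single_apply]

theorem SimpleGraph.Connected.mem_of_adj_closed {V : Type*} {G : SimpleGraph V}
    (hG : G.Connected) {S : Set V} (hS : ∀ v ∈ S, ∀ u, G.Adj v u → u ∈ S) {v : V} (hv : v ∈ S)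
    (u : V) : u ∈ S := by
  obtain ⟨p⟩ := hG.preconnected v u
  induction p with
  | nil => exact hv
  | cons hadj _ ih => exact ih (hS _ hv _ hadj)

section MaximumPrinciple

variable {V : Type*} [Fintype V] [DecidableEq V] {G : SimpleGraph V} {P : Matrix V V ℝ}

theorem apply_eq_of_adj_of_forall_le (hP : P ∈ rowStochastic ℝ V)
    (hPG : ∀ v u, G.Adj v u → 0 < P v u) {h : V → ℝ} {v : V} (hmax : ∀ u, h u ≤ h v)
    (hv : h v ≤ (P *ᵥ h) v) {u : V} (hadj : G.Adj v u) : h u = h v := by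
  have hsum : ∑ w, P v w * (h v - h w) = h v - (P *ᵥ h) v := by
    simp only [mul_sub, Finset.sum_sub_distrib, ← Finset.sum_mul,
      sum_row_of_mem_rowStochastic hP, one_mul, mulVec, dotProduct]
  have hnonneg : ∀ w ∈ Finset.univ, 0 ≤ P v w * (h v - h w) := fun w _ =>
    mul_nonneg (nonneg_of_mem_rowStochastic hP) (sub_nonneg.2 (hmax w))
  have hzero : ∑ w, P v w * (h v - h w) = 0 :=
    le_antisymm (by linarith) (Finset.sum_nonneg hnonneg)
  have hterm := (Finset.sum_eq_zero_iff_of_nonneg hnonneg).1 hzero u (Finset.mem_univ u)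
  rcases mul_eq_zero.1 hterm with h0 | h0
  · exact absurd h0 (hPG v u hadj).ne'
  · linarith

theorem le_zero_of_le_mulVec (hG : G.Connected) (hP : P ∈ rowStochastic ℝ V)
    (hPG : ∀ v u, G.Adj v u → 0 < P v u) {B : Finset V} (hB : B ⊂ Finset.univ) {h : V → ℝ}
    (hsub : ∀ v ∈ B, h v ≤ (P *ᵥ h) v) (hout : ∀ v ∉ B, h v ≤ 0) (v : V) : h v ≤ 0 := by
  obtain ⟨v₀, -, hv₀⟩ := Finset.exists_max_image Finset.univ h ⟨v, Finset.mem_univ v⟩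
  by_contra! hpos
  have hM : 0 < h v₀ := hpos.trans_le (hv₀ v (Finset.mem_univ v))
  have hmem : ∀ w, h w = h v₀ → w ∈ B := fun w hw => by
    by_contra hwB
    linarith [hout w hwB]
  have hall := hG.mem_of_adj_closed (S := {w | h w = h v₀}) (fun w hw u hadj => by
    simp only [Set.mem_ofPred_eq] at hw ⊢
    rw [← hw] at hv₀ ⊢
    exact apply_eq_of_adj_of_forall_le hP hPG (fun u => hv₀ u (Finset.mem_univ u))
      (hsub w (hmem w hw)) hadj) rfl
  obtain ⟨w, -, hw⟩ := Finset.exists_of_ssubset hB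
  exact hw (hmem w (hall w))

end MaximumPrinciple

section Green

variable {V : Type*} [Fintype V] [DecidableEq V] {G : SimpleGraph V} {P : Matrix V V ℝ}
  {A : Finset V}

theorem killedMatrix_mulVec_of_notMem {v : V} (hv : v ∉ A) (f : V → ℝ) :
    (killedMatrix P A *ᵥ f) v = 0 := by
  simp [killedMatrix, mulVec, dotProduct, hv]

theorem killedMatrix_mulVec_of_mem {v : V} (hv : v ∈ A) {f : V → ℝ} (hf : ∀ u ∉ A, f u = 0) :
    (killedMatrix P A *ᵥ f) v = (P *ᵥ f) v := by
  refine Finset.sum_congr rfl fun u _ => ?_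
  by_cases hu : u ∈ A
  · simp [killedMatrix, hv, hu]
  · simp [killedMatrix, hu, hf u hu]

theorem exists_eq_add_killedMatrix_mulVec (hG : G.Connected) (hP : P ∈ rowStochastic ℝ V)
    (hPG : ∀ v u, G.Adj v u → 0 < P v u) (hA : A ⊂ Finset.univ) (f : V → ℝ) :
    ∃ φ : V → ℝ, φ = f + killedMatrix P A *ᵥ φ := by
  suffices hinj : Function.Injective (1 - killedMatrix P A).mulVec by
    obtain ⟨φ, hφ⟩ := mulVec_surjective_iff_isUnit.2 (mulVec_injective_iff_isUnit.1 hinj) f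
    exact ⟨φ, by rw [← hφ, sub_mulVec, one_mulVec, sub_add_cancel]⟩
  suffices hker : ∀ x, (1 - killedMatrix P A) *ᵥ x = 0 → x = 0 from fun x y hxy =>
    sub_eq_zero.1 (hker _ (by rw [mulVec_sub, hxy, sub_self]))
  intro x hx
  have hfix : x = killedMatrix P A *ᵥ x := by
    rwa [sub_mulVec, one_mulVec, sub_eq_zero] at hx
  have hout : ∀ v ∉ A, x v = 0 := fun v hv => by
    rw [hfix, killedMatrix_mulVec_of_notMem hv]
  have hharm : ∀ v ∈ A, x v = (P *ᵥ x) v := fun v hv => by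
    rw [← killedMatrix_mulVec_of_mem hv hout, ← hfix]
  funext v
  refine le_antisymm (le_zero_of_le_mulVec hG hP hPG hA (fun w hw => (hharm w hw).le)
    (fun w hw => (hout w hw).le) v) ?_
  have := le_zero_of_le_mulVec hG hP hPG hA (h := -x) (fun w hw => by
    simp [mulVec_neg, hharm w hw]) (fun w hw => by simp [hout w hw]) v
  simpa using this

variable {i : V} {φ : V → ℝ}

theorem green_eq_zero_of_notMem (hi : i ∈ A) (hφ : φ = Pi.single i 1 + killedMatrix P A *ᵥ φ)
    {v : V} (hv : v ∉ A) : φ v = 0 := by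
  rw [hφ, Pi.add_apply, killedMatrix_mulVec_of_notMem hv,
    Pi.single_eq_of_ne (by rintro rfl; exact hv hi), add_zero]

theorem green_eq_of_mem (hi : i ∈ A) (hφ : φ = Pi.single i 1 + killedMatrix P A *ᵥ φ)
    {v : V} (hv : v ∈ A) : φ v = (Pi.single i 1 : V → ℝ) v + (P *ᵥ φ) v := by
  conv_lhs => rw [hφ]
  rw [Pi.add_apply, killedMatrix_mulVec_of_mem hv fun u hu => green_eq_zero_of_notMem hi hφ hu]

theorem green_nonneg (hG : G.Connected) (hP : P ∈ rowStochastic ℝ V)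
    (hPG : ∀ v u, G.Adj v u → 0 < P v u) (hA : A ⊂ Finset.univ) (hi : i ∈ A)
    (hφ : φ = Pi.single i 1 + killedMatrix P A *ᵥ φ) : 0 ≤ φ := fun v => by
  have := le_zero_of_le_mulVec hG hP hPG hA (h := -φ) (fun w hw => by
    have hδ : (0 : ℝ) ≤ (Pi.single i 1 : V → ℝ) w := by
      rcases eq_or_ne w i with rfl | hwi <;> simp [*]
    simp only [Pi.neg_apply, mulVec_neg, green_eq_of_mem hi hφ hw]
    linarith) (fun w hw => by simp [green_eq_zero_of_notMem hi hφ hw]) v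
  simpa using this

theorem green_le_apply_self (hG : G.Connected) (hP : P ∈ rowStochastic ℝ V)
    (hPG : ∀ v u, G.Adj v u → 0 < P v u) (hA : A ⊂ Finset.univ) (hi : i ∈ A)
    (hφ : φ = Pi.single i 1 + killedMatrix P A *ᵥ φ) (v : V) : φ v ≤ φ i := by
  have hshift : ∀ w, (P *ᵥ fun u => φ u - φ i) w = (P *ᵥ φ) w - φ i := fun w => by
    simp only [mulVec, dotProduct, mul_sub, Finset.sum_sub_distrib, ← Finset.sum_mul,
      sum_row_of_mem_rowStochastic hP, one_mul]
  have := le_zero_of_le_mulVec hG hP hPG ((A.erase_subset i).trans_ssubset hA)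
    (h := fun u => φ u - φ i) (fun w hw => by
      rw [hshift, green_eq_of_mem hi hφ (Finset.mem_of_mem_erase hw),
        Pi.single_eq_of_ne (Finset.ne_of_mem_erase hw), zero_add])
    (fun w hw => by
      rcases eq_or_ne w i with rfl | hwi
      · simp
      · simpa [green_eq_zero_of_notMem hi hφ (fun h => hw (Finset.mem_erase.2 ⟨hwi, h⟩))]
          using green_nonneg hG hP hPG hA hi hφ i) v
  linarith

end Green

theorem sq_sub_le_mul_sum_inv (x c : ℕ → ℝ) {k : ℕ} (hc : ∀ j < k, 0 < c j) :
    (x 0 - x k) ^ 2 ≤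
      (∑ j ∈ Finset.range k, c j * (x j - x (j + 1)) ^ 2) * ∑ j ∈ Finset.range k, (c j)⁻¹ := by
  rcases Nat.eq_zero_or_pos k with rfl | hk
  · simp
  have hc' : ∀ j ∈ Finset.range k, 0 < (c j)⁻¹ := fun j hj =>
    inv_pos.2 (hc j (Finset.mem_range.1 hj))
  have hR : 0 < ∑ j ∈ Finset.range k, (c j)⁻¹ :=
    Finset.sum_pos hc' ⟨0, Finset.mem_range.2 hk⟩
  have := Finset.sq_sum_div_le_sum_sq_div (Finset.range k) (fun j => x j - x (j + 1)) hc'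
  rw [Finset.sum_range_sub', div_le_iff₀ hR] at this
  simpa only [div_inv_eq_mul, mul_comm] using this

theorem two_mul_sum_path_le_sum {V : Type*} [Fintype V] [DecidableEq V] {F : V → V → ℝ}
    (hF : ∀ v u, 0 ≤ F v u) (hFsymm : ∀ v u, F v u = F u v) {d : V → ℕ} {g : ℕ → V} {k : ℕ}
    (hd : ∀ j ≤ k, d (g j) = j) :
    2 * ∑ j ∈ Finset.range k, F (g j) (g (j + 1)) ≤ ∑ v, ∑ u, F v u := by
  -- the path steps go up in `d`, their reversals go down: each appears once in its half of the sum
  set up : V → V → ℝ := fun v u => if d v < d u then F v u else 0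
  have hinj : Set.InjOn (fun j => (g j, g (j + 1))) (Finset.range k) := fun a ha b hb hab => by
    have := congrArg (d ∘ Prod.fst) hab
    simp only [Function.comp, Finset.coe_range, Set.mem_Iio] at this ha hb
    rwa [hd a ha.le, hd b hb.le] at this
  have hpath : ∑ j ∈ Finset.range k, F (g j) (g (j + 1)) ≤ ∑ v, ∑ u, up v u :=
    calc ∑ j ∈ Finset.range k, F (g j) (g (j + 1))
        = ∑ j ∈ Finset.range k, up (g j) (g (j + 1)) := Finset.sum_congr rfl fun j hj => by
          have hj := Finset.mem_range.1 hj
          simp [up, hd j hj.le, hd (j + 1) hj]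
      _ = ∑ p ∈ (Finset.range k).image fun j => (g j, g (j + 1)), up p.1 p.2 :=
          (Finset.sum_image (f := fun p => up p.1 p.2) hinj).symm
      _ ≤ ∑ p : V × V, up p.1 p.2 := Finset.sum_le_sum_of_subset_of_nonneg (Finset.subset_univ _)
          fun p _ _ => by simp only [up]; split_ifs <;> simp [hF]
      _ = ∑ v, ∑ u, up v u := Fintype.sum_prod_type _
  have hsplit : ∑ v, ∑ u, up v u + ∑ v, ∑ u, up u v ≤ ∑ v, ∑ u, F v u := by
    simp only [← Finset.sum_add_distrib]
    refine Finset.sum_le_sum fun v _ => Finset.sum_le_sum fun u _ => ?_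
    simp only [up]
    split_ifs <;> first | omega | simp [hF, hFsymm u v]
  rw [Finset.sum_comm (f := fun v u => up u v)] at hsplit
  linarith

section Energy

variable {V : Type*} [Fintype V] [DecidableEq V] {P : Matrix V V ℝ}

theorem sum_mul_sub_sq_eq (hP : P ∈ rowStochastic ℝ V) (hsymm : P.IsSymm) (f : V → ℝ) :
    ∑ v, ∑ u, P v u * (f v - f u) ^ 2 = 2 * ∑ v, f v * (f v - (P *ᵥ f) v) := by
  have hrow : ∀ v, ∑ u, P v u * f v ^ 2 = f v ^ 2 := fun v => by
    rw [← Finset.sum_mul, sum_row_of_mem_rowStochastic hP, one_mul]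
  have hcol : ∑ v, ∑ u, P v u * f u ^ 2 = ∑ u, f u ^ 2 := by
    rw [Finset.sum_comm]
    exact Finset.sum_congr rfl fun u _ => by simp_rw [hsymm.apply u, hrow]
  have hexpand : ∀ v u, P v u * (f v - f u) ^ 2 =
      P v u * f v ^ 2 + P v u * f u ^ 2 - 2 * (f v * (P v u * f u)) := fun v u => by ring
  simp only [hexpand, Finset.sum_sub_distrib, Finset.sum_add_distrib, hrow, hcol,
    ← Finset.mul_sum, mulVec, dotProduct, mul_sub]
  simp only [sq]
  ring

variable {A : Finset V} {i : V} {φ : V → ℝ}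

theorem green_energy (hP : P ∈ rowStochastic ℝ V) (hsymm : P.IsSymm) (hi : i ∈ A)
    (hφ : φ = Pi.single i 1 + killedMatrix P A *ᵥ φ) :
    ∑ v, ∑ u, P v u * (φ v - φ u) ^ 2 = 2 * φ i := by
  have hterm : ∀ v, φ v * (φ v - (P *ᵥ φ) v) = φ v * (Pi.single i 1 : V → ℝ) v := fun v => by
    by_cases hv : v ∈ A
    · rw [green_eq_of_mem hi hφ hv, add_sub_cancel_right, ← green_eq_of_mem hi hφ hv]
    · simp [green_eq_zero_of_notMem hi hφ hv]
  simp [sum_mul_sub_sq_eq hP hsymm, hterm, Pi.single_apply]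

theorem green_apply_self_le_sum_inv (hP : P ∈ rowStochastic ℝ V) (hsymm : P.IsSymm) (hi : i ∈ A)
    (hφ : φ = Pi.single i 1 + killedMatrix P A *ᵥ φ) {g : ℕ → V} {k : ℕ} {d : V → ℕ}
    (hg0 : g 0 = i) (hgk : g k ∉ A) (hpos : ∀ j < k, 0 < P (g j) (g (j + 1)))
    (hd : ∀ j ≤ k, d (g j) = j) :
    φ i ≤ ∑ j ∈ Finset.range k, (P (g j) (g (j + 1)))⁻¹ := by
  have henergy := green_energy hP hsymm hi hφ
  have hφi : 0 ≤ φ i := by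
    have : 0 ≤ ∑ v, ∑ u, P v u * (φ v - φ u) ^ 2 := Finset.sum_nonneg fun v _ =>
      Finset.sum_nonneg fun u _ => mul_nonneg (nonneg_of_mem_rowStochastic hP) (sq_nonneg _)
    linarith
  have hpath := two_mul_sum_path_le_sum (F := fun v u => P v u * (φ v - φ u) ^ 2)
    (fun v u => mul_nonneg (nonneg_of_mem_rowStochastic hP) (sq_nonneg _))
    (fun v u => by rw [hsymm.apply u v]; ring) hd
  have hcs := sq_sub_le_mul_sum_inv (fun j => φ (g j)) (fun j => P (g j) (g (j + 1))) hpos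
  simp only [hg0, green_eq_zero_of_notMem hi hφ hgk, sub_zero] at hcs
  have hR : 0 ≤ ∑ j ∈ Finset.range k, (P (g j) (g (j + 1)))⁻¹ :=
    Finset.sum_nonneg fun j _ => inv_nonneg.2 (nonneg_of_mem_rowStochastic hP)
  nlinarith

end Energy

theorem mulVec_mono {V : Type*} [Fintype V] {P : Matrix V V ℝ} (hP : ∀ v u, 0 ≤ P v u)
    {f g : V → ℝ} (hfg : f ≤ g) : P *ᵥ f ≤ P *ᵥ g :=
  fun v => Finset.sum_le_sum fun u _ => mul_le_mul_of_nonneg_left (hfg u) (hP v u)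

section EscapeTime

variable {V : Type*} [Fintype V] [DecidableEq V] {G : SimpleGraph V} {P : Matrix V V ℝ}
  {A : Finset V}

theorem sum_range_pow_mulVec_le {M : Matrix V V ℝ} (hM : ∀ v u, 0 ≤ M v u) {f φ : V → ℝ}
    (hφ0 : 0 ≤ φ) (hφ : f + M *ᵥ φ ≤ φ) (T : ℕ) : ∑ t ∈ Finset.range T, M ^ t *ᵥ f ≤ φ := by
  induction T with
  | zero => simpa using hφ0
  | succ T ih =>
    calc ∑ t ∈ Finset.range (T + 1), M ^ t *ᵥ f = f + M *ᵥ ∑ t ∈ Finset.range T, M ^ t *ᵥ f := by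
          simp [Finset.sum_range_succ', pow_succ', mulVec_sum, add_comm]
      _ ≤ f + M *ᵥ φ := add_le_add le_rfl (mulVec_mono hM ih)
      _ ≤ φ := hφ

variable {i : V} {φ : V → ℝ}

theorem sum_green_le_card_mul (hG : G.Connected) (hP : P ∈ rowStochastic ℝ V)
    (hPG : ∀ v u, G.Adj v u → 0 < P v u) (hA : A ⊂ Finset.univ) (hi : i ∈ A)
    (hφ : φ = Pi.single i 1 + killedMatrix P A *ᵥ φ) : ∑ v, φ v ≤ A.card * φ i := by
  rw [← Finset.sum_subset (Finset.subset_univ A) fun v _ hv => green_eq_zero_of_notMem hi hφ hv]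
  simpa using Finset.sum_le_card_nsmul A φ (φ i) fun v _ => green_le_apply_self hG hP hPG hA hi hφ v

theorem tsum_prTraj_stay_le (hG : G.Connected) (hP : P ∈ rowStochastic ℝ V) (hsymm : P.IsSymm)
    (hPG : ∀ v u, G.Adj v u → 0 < P v u) (hA : A ⊂ Finset.univ) (hi : i ∈ A)
    (hφ : φ = Pi.single i 1 + killedMatrix P A *ᵥ φ) :
    ∑' t : ℕ, ENNReal.ofReal (prTraj P (dirac i) t {x | ∀ s : Fin (t + 1), 1 ≤ s.val → x s ∈ A})
      ≤ ENNReal.ofReal (A.card * φ i) := by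
  have hQ := killedMatrix_nonneg (P := P) (A := A) fun _ _ => nonneg_of_mem_rowStochastic hP
  have hprob : ∀ t, prTraj P (dirac i) t {x | ∀ s : Fin (t + 1), 1 ≤ s.val → x s ∈ A} =
      ∑ v, (killedMatrix P A ^ t) v i := fun t => by
    rw [prTraj_stay_eq_sum_vecMul_pow (fun v hv => by simp [dirac]; rintro rfl; exact hv hi),
      dirac_eq_single, single_one_vecMul]
    -- row `i` of the symmetric matrix `Qᵗ` is its column `i`
    simp [((hsymm.killedMatrix (A := A)).pow t).apply]
  refine ENNReal.tsum_le_of_sum_range_le fun T => ?_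
  simp only [hprob]
  rw [← ENNReal.ofReal_sum_of_nonneg fun t _ =>
    Finset.sum_nonneg fun v _ => pow_apply_nonneg hQ t v i]
  refine ENNReal.ofReal_le_ofReal ?_
  calc ∑ t ∈ Finset.range T, ∑ v, (killedMatrix P A ^ t) v i
      = ∑ v, (∑ t ∈ Finset.range T, killedMatrix P A ^ t *ᵥ Pi.single i 1) v := by
        rw [Finset.sum_comm]
        simp [Finset.sum_apply]
    _ ≤ ∑ v, φ v := Finset.sum_le_sum fun v _ => sum_range_pow_mulVec_le hQ
        (green_nonneg hG hP hPG hA hi hφ) hφ.symm.le T v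
    _ ≤ A.card * φ i := sum_green_le_card_mul hG hP hPG hA hi hφ

end EscapeTime

theorem sum_range_max_le (a : ℕ → ℕ) {D : ℕ} (ha : ∀ j, a j ≤ D) (k : ℕ) :
    ∑ j ∈ Finset.range k, max (a j) (a (j + 1)) ≤ 2 * ∑ j ∈ Finset.range (k - 1), a j + 2 * D := by
  rcases k with _ | n
  · simp
  have hmax : ∑ j ∈ Finset.range n, max (a j) (a (j + 1)) ≤
      ∑ j ∈ Finset.range n, a j + ∑ j ∈ Finset.range n, a (j + 1) := by
    rw [← Finset.sum_add_distrib]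
    exact Finset.sum_le_sum fun j _ => max_le_add_of_nonneg (Nat.zero_le _) (Nat.zero_le _)
  have hshift := (Finset.sum_range_succ a n).symm.trans (Finset.sum_range_succ' a n)
  rw [Finset.sum_range_succ, Nat.add_sub_cancel]
  have := ha n
  have := ha (n + 1)
  omega

namespace SimpleGraph

variable {V : Type*} [Fintype V] [DecidableEq V] {G : SimpleGraph V}

theorem Connected.exists_geodesic_to_compl (hG : G.Connected) {A : Finset V}
    (hA : A ⊂ Finset.univ) (i : V) :
    ∃ (k : ℕ) (g : ℕ → V), g 0 = i ∧ g k ∉ A ∧ (∀ j < k, G.Adj (g j) (g (j + 1))) ∧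
      (∀ j ≤ k, G.dist i (g j) = j) ∧ ∀ u ∉ A, k ≤ G.dist i u := by
  obtain ⟨w₀, -, hw₀⟩ := Finset.exists_of_ssubset hA
  obtain ⟨w, hw, hmin⟩ := Finset.exists_min_image (Finset.univ.filter (· ∉ A)) (G.dist i)
    ⟨w₀, by simp [hw₀]⟩
  obtain ⟨p, hp⟩ := hG.exists_walk_length_eq_dist i w
  refine ⟨p.length, p.getVert, p.getVert_zero, ?_, fun j hj => p.adj_getVert_succ hj,
    fun j hj => ?_, fun u hu => hp ▸ hmin u (by simp [hu])⟩
  · rw [p.getVert_length]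
    simpa using hw
  · rw [← length_eq_dist_of_subwalk hp (p.isSubwalk_take j), Walk.take_length,
      min_eq_left hj]

variable [DecidableRel G.Adj]

theorem sum_degree_le_three_mul_card {A : Finset V} {i : V} {g : ℕ → V} {k : ℕ}
    (hd : ∀ j ≤ k, G.dist i (g j) = j) (hA : ∀ u ∉ A, k ≤ G.dist i u) :
    ∑ j ∈ Finset.range (k - 1), G.degree (g j) ≤ 3 * A.card := by
  set r : ℕ → V → Prop := fun j u => G.Adj (g j) u
  have hcount : ∀ u, ((Finset.range (k - 1)).bipartiteBelow r u).card ≤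
      if u ∈ A then 3 else 0 := fun u => by
    have hdist : ∀ j ∈ (Finset.range (k - 1)).bipartiteBelow r u,
        j < k - 1 ∧ j ≤ G.dist i u + 1 ∧ G.dist i u ≤ j + 1 := fun j hj => by
      simp only [Finset.bipartiteBelow, Finset.mem_filter, Finset.mem_range, r] at hj
      have := (hj.2).diff_dist_adj (u := i)
      rw [hd j (by omega)] at this
      omega
    split_ifs with hu
    · calc _ ≤ (Finset.Icc (G.dist i u - 1) (G.dist i u + 1)).card :=
            Finset.card_le_card fun j hj => by
              have := hdist j hj
              rw [Finset.mem_Icc]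
              omega
        _ ≤ 3 := by simp only [Nat.card_Icc]; omega
    · refine (Finset.card_eq_zero.2 (Finset.eq_empty_of_forall_notMem fun j hj => ?_)).le
      have := hdist j hj
      have := hA u hu
      omega
  calc ∑ j ∈ Finset.range (k - 1), G.degree (g j)
      = ∑ j ∈ Finset.range (k - 1), (Finset.univ.bipartiteAbove r j).card := by
        simp [Finset.bipartiteAbove, r, ← card_neighborFinset_eq_degree, neighborFinset_eq_filter]
    _ = ∑ u, ((Finset.range (k - 1)).bipartiteBelow r u).card :=
        Finset.sum_card_bipartiteAbove_eq_sum_card_bipartiteBelow _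
    _ ≤ ∑ u, if u ∈ A then 3 else 0 := Finset.sum_le_sum fun u _ => hcount u
    _ = 3 * A.card := by simp [Finset.sum_ite_mem, mul_comm]

end SimpleGraph

theorem sum_min_inv_degree_le_one {V : Type*} [Fintype V] {G : SimpleGraph V}
    [DecidableRel G.Adj] (v : V) :
    ∑ w ∈ G.neighborFinset v, min ((G.degree v : ℝ))⁻¹ ((G.degree w : ℝ))⁻¹ ≤ 1 :=
  calc _ ≤ ∑ w ∈ G.neighborFinset v, ((G.degree v : ℝ))⁻¹ :=
        Finset.sum_le_sum fun _ _ => min_le_left _ _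
    _ = G.degree v * ((G.degree v : ℝ))⁻¹ := by simp
    _ ≤ 1 := mul_inv_le_one

section MetropolisHastings

variable {V : Type*} [Fintype V] [DecidableEq V] {G : SimpleGraph V} [DecidableRel G.Adj]

theorem mhMatrix_mem_rowStochastic : mhMatrix G ∈ rowStochastic ℝ V := by
  have hsplit : ∀ v u, mhMatrix G v u =
      (if u = v then 1 - ∑ w ∈ G.neighborFinset v, min ((G.degree v : ℝ))⁻¹ ((G.degree w : ℝ))⁻¹
        else 0) + if G.Adj v u then min ((G.degree v : ℝ))⁻¹ ((G.degree u : ℝ))⁻¹ else 0 :=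
    fun v u => by by_cases h : u = v <;> simp [mhMatrix, h]
  refine mem_rowStochastic_iff_sum.2 ⟨fun v u => ?_, fun v => ?_⟩
  · rw [hsplit]
    have := sum_min_inv_degree_le_one (G := G) v
    split_ifs <;> first | linarith | positivity
  · simp only [hsplit, Finset.sum_add_distrib, Finset.sum_ite_eq', Finset.mem_univ, if_true,
      ← Finset.sum_filter, ← SimpleGraph.neighborFinset_eq_filter, sub_add_cancel]

theorem mhMatrix_isSymm : (mhMatrix G).IsSymm := IsSymm.ext fun v u => by
  by_cases h : u = v
  · rw [h]
  · simp [mhMatrix, h, Ne.symm h, G.adj_comm, min_comm]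

theorem inv_mhMatrix_of_adj {v u : V} (h : G.Adj v u) :
    (mhMatrix G v u)⁻¹ = ((max (G.degree v) (G.degree u) : ℕ) : ℝ) := by
  have hv : (0 : ℝ) < G.degree v := by exact_mod_cast G.degree_pos_iff_exists_adj v |>.2 ⟨u, h⟩
  have hu : (0 : ℝ) < G.degree u := by exact_mod_cast G.degree_pos_iff_exists_adj u |>.2 ⟨v, h.symm⟩
  simp only [mhMatrix, of_apply, h.ne', h, if_false, if_true, Nat.cast_max]
  rcases le_total (G.degree v : ℝ) (G.degree u) with hle | hle
  · rw [min_eq_right (inv_anti₀ hv hle), inv_inv, max_eq_right hle]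
  · rw [min_eq_left (inv_anti₀ hu hle), inv_inv, max_eq_left hle]

theorem mhMatrix_pos_of_adj {v u : V} (h : G.Adj v u) : 0 < mhMatrix G v u := by
  have hv : 0 < G.degree v := G.degree_pos_iff_exists_adj v |>.2 ⟨u, h⟩
  refine inv_pos.1 ?_
  rw [inv_mhMatrix_of_adj h]
  exact_mod_cast hv.trans_le (le_max_left _ _)

end MetropolisHastings

theorem green_apply_self_le_of_mhMatrix {V : Type*} [Fintype V] [DecidableEq V]
    {G : SimpleGraph V} [DecidableRel G.Adj] (hG : G.Connected) {A : Finset V}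
    (hA : A ⊂ Finset.univ) {i : V} (hi : i ∈ A) {φ : V → ℝ}
    (hφ : φ = Pi.single i 1 + killedMatrix (mhMatrix G) A *ᵥ φ) :
    φ i ≤ 6 * A.card + 2 * G.maxDegree := by
  obtain ⟨k, g, hg0, hgk, hadj, hd, hmin⟩ := hG.exists_geodesic_to_compl hA i
  have hdeg := G.sum_degree_le_three_mul_card hd hmin
  have hmax := sum_range_max_le (fun j => G.degree (g j)) (fun j => G.degree_le_maxDegree (g j)) k
  calc φ i ≤ ∑ j ∈ Finset.range k, (mhMatrix G (g j) (g (j + 1)))⁻¹ :=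
        green_apply_self_le_sum_inv mhMatrix_mem_rowStochastic mhMatrix_isSymm hi hφ hg0 hgk
          (fun j hj => mhMatrix_pos_of_adj (hadj j hj)) hd
    _ = ((∑ j ∈ Finset.range k, max (G.degree (g j)) (G.degree (g (j + 1))) : ℕ) : ℝ) := by
        rw [Nat.cast_sum]
        exact Finset.sum_congr rfl fun j hj => inv_mhMatrix_of_adj (hadj j (Finset.mem_range.1 hj))
    _ ≤ ((6 * A.card + 2 * G.maxDegree : ℕ) : ℝ) := by
        exact_mod_cast hmax.trans (by omega)
    _ = 6 * A.card + 2 * G.maxDegree := by push_cast; ring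

/-- `E_i T_{V∖A}` is written as the tail sum `∑' t, Pr_i[T_{V∖A} > t]`. -/
theorem mh_escape_time {V : Type*} [Fintype V] [DecidableEq V] (G : SimpleGraph V)
    [DecidableRel G.Adj] (hG : G.Connected)
    (A : Finset V) (hA : A ⊂ Finset.univ) (i : V) (hi : i ∈ A) :
    (∑' t : ℕ, ENNReal.ofReal (prTraj (mhMatrix G) (dirac i) t
        {x | ∀ s : Fin (t + 1), 1 ≤ s.val → x s ∈ A})) <
      ENNReal.ofReal (((A.card : ℝ) + 1) * (6 * (A.card : ℝ) + 2 * (G.maxDegree : ℝ))) := by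
  have hPG : ∀ v u, G.Adj v u → 0 < mhMatrix G v u := fun _ _ => mhMatrix_pos_of_adj
  obtain ⟨φ, hφ⟩ :=
    exists_eq_add_killedMatrix_mulVec hG mhMatrix_mem_rowStochastic hPG hA (Pi.single i 1)
  have hbound := green_apply_self_le_of_mhMatrix hG hA hi hφ
  have hφi := green_nonneg hG mhMatrix_mem_rowStochastic hPG hA hi hφ i
  have hcard : (1 : ℝ) ≤ A.card := by exact_mod_cast Finset.card_pos.2 ⟨i, hi⟩
  calc _ ≤ ENNReal.ofReal (A.card * φ i) :=
        tsum_prTraj_stay_le hG mhMatrix_mem_rowStochastic mhMatrix_isSymm hPG hA hi hφ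
    _ < _ := by
        have hΔ : (0 : ℝ) ≤ G.maxDegree := Nat.cast_nonneg _
        rw [ENNReal.ofReal_lt_ofReal_iff (mul_pos (by linarith) (by linarith))]
        nlinarith
end

section
/- Let G = (V,E) be a finite simple undirected graph and A ⊆ V. Let (i_0, i_1, …, i_k) be a shortest path in G (i.e., a path whose number of edges k equals the graph distance between i_0 and i_k) such that every vertex i_l of the path belongs to A and every neighbor of every vertex i_l belongs to A. Then Σ_{l=0}^{k} deg(i_l) ≤ 3|A|. -/
/-!
Count the degree sum from the side of `A`: since every neighbour of a path vertex lies in `A`,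
`∑ₗ deg(iₗ)` is the number of pairs `(l, y)` with `y ∈ A` adjacent to `iₗ`. A vertex `y` adjacent
to both `iₘ` and `iₗ` gives a detour `iₘ → y → iₗ` of length two, so on a shortest path
`l ≤ m + 2`; hence each `y` is adjacent to at most three consecutive path vertices.
-/

open Finset

theorem Finset.card_le_add_one_of_forall_le_add {s : Finset ℕ} {d : ℕ}
    (h : ∀ a ∈ s, ∀ b ∈ s, b ≤ a + d) : #s ≤ d + 1 := by
  rcases s.eq_empty_or_nonempty with rfl | hs
  · simp
  calc #s ≤ #(Icc (s.min' hs) (s.min' hs + d)) :=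
        card_le_card fun b hb => mem_Icc.2 ⟨s.min'_le b hb, h _ (s.min'_mem hs) b hb⟩
    _ = d + 1 := by rw [Nat.card_Icc]; omega

namespace SimpleGraph

variable {V : Type*} {G : SimpleGraph V}

theorem degree_eq_card_filter_adj [Fintype V] [DecidableRel G.Adj] {A : Finset V} {x : V}
    (hA : G.neighborFinset x ⊆ A) : G.degree x = #{y ∈ A | G.Adj x y} := by
  rw [← card_neighborFinset_eq_degree]
  congr 1
  ext y
  simpa using fun hxy => hA ((mem_neighborFinset G x y).2 hxy)

namespace Walk

theorem sum_map_support_eq_sum_range {M : Type*} [AddCommMonoid M] (f : V → M) {u v : V}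
    (w : G.Walk u v) :
    (w.support.map f).sum = ∑ l ∈ range (w.length + 1), f (w.getVert l) := by
  induction w with
  | nil => simp
  | cons h p ih =>
    rw [support_cons, List.map_cons, List.sum_cons, ih, length_cons, sum_range_succ' _ (_ + 1)]
    simp only [getVert_cons_succ, getVert_zero]
    exact add_comm _ _

theorem le_add_two_of_adj_getVert {u v y : V} {w : G.Walk u v} (hw : w.length = G.dist u v)
    {m l : ℕ} (hl : l ≤ w.length) (hm : G.Adj (w.getVert m) y) (hl' : G.Adj (w.getVert l) y) :
    l ≤ m + 2 := by
  have := dist_le ((w.take m).append (cons hm (cons hl'.symm (w.drop l))))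
  simp only [length_append, length_cons, take_length, drop_length, ← hw] at this
  omega

theorem card_filter_adj_getVert_le_three {u v : V} {w : G.Walk u v}
    (hw : w.length = G.dist u v) (y : V) [DecidablePred (G.Adj · y)] :
    #{l ∈ range (w.length + 1) | G.Adj (w.getVert l) y} ≤ 3 := by
  refine card_le_add_one_of_forall_le_add fun m hm l hl => ?_
  simp only [mem_filter, mem_range] at hm hl
  exact le_add_two_of_adj_getVert hw (by omega) hm.2 hl.2

end Walk

end SimpleGraph

theorem shortest_path_degree_sum_general {V : Type*} [Fintype V]
    (G : SimpleGraph V) [DecidableRel G.Adj] (A : Finset V) (u v : V)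
    (w : G.Walk u v) (hshort : w.length = G.dist u v)
    (hN : ∀ x ∈ w.support, ∀ y ∈ G.neighborFinset x, y ∈ A) :
    (w.support.map fun x => G.degree x).sum ≤ 3 * A.card := by
  rw [SimpleGraph.Walk.sum_map_support_eq_sum_range]
  calc ∑ l ∈ range (w.length + 1), G.degree (w.getVert l)
      = ∑ l ∈ range (w.length + 1), #{y ∈ A | G.Adj (w.getVert l) y} :=
        sum_congr rfl fun l _ =>
          G.degree_eq_card_filter_adj fun y hy => hN _ (w.getVert_mem_support l) y hy
    _ = ∑ y ∈ A, #{l ∈ range (w.length + 1) | G.Adj (w.getVert l) y} :=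
        sum_card_bipartiteAbove_eq_sum_card_bipartiteBelow _
    _ ≤ ∑ _y ∈ A, 3 := sum_le_sum fun y _ => SimpleGraph.Walk.card_filter_adj_getVert_le_three hshort y
    _ = 3 * #A := by rw [sum_const, smul_eq_mul, mul_comm]

/-- If `(i_0,…,i_k)` is a shortest path in `G` all of whose vertices lie in `A` and all of
whose vertices' neighbors lie in `A`, then the sum of the degrees of its vertices is at
most `3 |A|`. -/
theorem shortest_path_degree_sum {V : Type*} [Fintype V] [DecidableEq V]
    (G : SimpleGraph V) [DecidableRel G.Adj] (A : Finset V) (u v : V)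
    (w : G.Walk u v) (hshort : w.length = G.dist u v)
    (hA : ∀ x ∈ w.support, x ∈ A)
    (hN : ∀ x ∈ w.support, ∀ y ∈ G.neighborFinset x, y ∈ A) :
    (w.support.map fun x => G.degree x).sum ≤ 3 * A.card :=
  shortest_path_degree_sum_general G A u v w hshort hN
end
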